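/- For every positive integer n, $\frac{B_n(x+iy)+B_n(x-iy)}{2} = \sum_{m=0}^{\lfloor n/2\rfloor}\binom{n}{2m}B_{n-2m}(x)\,y^{2m}(-1)^m$, where $B_n(z)$ are the type 2 Bernoulli polynomials of a complex variable. -/

import Mathlib

open PowerSeries Finset Complex

/-- The degenerate falling factorial `(x)_{n,λ} = x(x-λ)⋯(x-(n-1)λ)`. -/
noncomputable def dff (l x : ℂ) (n : ℕ) : ℂ := ∏ j ∈ Finset.range n, (x - j * l)

/-- Exponential generating function of a sequence: `Σ f n * t^n / n!`. -/
noncomputable def egf (f : ℕ → ℂ) : PowerSeries ℂ := PowerSeries.mk fun n => f n / n.factorial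

/-- The degenerate exponential `e_λ^x(t) = (1+λt)^{x/λ} = Σ (x)_{n,λ} t^n/n!` as a power series. -/
noncomputable def degExp (l x : ℂ) : PowerSeries ℂ := egf (dff l x)

/-- The degenerate cosine `cos_λ^{(y)}(t) = cos((y/λ) log(1+λt)) = (e_λ^{iy}(t)+e_λ^{-iy}(t))/2`. -/
noncomputable def degCos (l y : ℂ) : PowerSeries ℂ :=
  PowerSeries.C (1/2 : ℂ) * (degExp l (Complex.I * y) + degExp l (-(Complex.I * y)))

/-- The degenerate sine `sin_λ^{(y)}(t) = sin((y/λ) log(1+λt)) = (e_λ^{iy}(t)-e_λ^{-iy}(t))/(2i)`. -/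
noncomputable def degSin (l y : ℂ) : PowerSeries ℂ :=
  PowerSeries.C (1/(2*Complex.I) : ℂ) * (degExp l (Complex.I * y) - degExp l (-(Complex.I * y)))

/-- The exponential series `e^{at} = Σ a^n t^n/n!`. -/
noncomputable def expS (a : ℂ) : PowerSeries ℂ := egf (fun n => a ^ n)

/-- The series of `log(1+t)`. -/
noncomputable def logS : PowerSeries ℂ := PowerSeries.mk fun n => if n = 0 then 0 else (-1)^(n+1) / n

/-!
The generating function `t / (e^{t/2} - e^{-t/2}) · e^{zt}` is a fixed series times `e^{zt}`, so
`B_n` is an Appell sequence: `B_n(x + w) = ∑ₖ C(n,k) wᵏ B_{n-k}(x)`. Averaging this over `w = ±iy`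
kills the odd `k`, and `(iy)^{2m} = (-1)^m y^{2m}`.
-/

lemma egf_injective : Function.Injective egf := by
  intro f g h
  funext n
  have hn := congrArg (coeff n) h
  simp only [egf, coeff_mk] at hn
  exact (div_left_inj' (Nat.cast_ne_zero.mpr n.factorial_ne_zero)).mp hn

lemma egf_mul_egf (f g : ℕ → ℂ) :
    egf f * egf g = egf fun n => ∑ k ∈ range (n + 1), (n.choose k : ℂ) * f k * g (n - k) := by
  ext n
  simp only [coeff_mul, Nat.sum_antidiagonal_eq_sum_range_succ_mk, egf, coeff_mk, sum_div]
  refine sum_congr rfl fun k hk => ?_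
  have hkn : k ≤ n := Nat.lt_succ_iff.mp (mem_range.mp hk)
  have hn : (n.factorial : ℂ) ≠ 0 := Nat.cast_ne_zero.mpr n.factorial_ne_zero
  rw [Nat.cast_choose ℂ hkn]
  field_simp

lemma expS_eq_rescale_exp (a : ℂ) : expS a = rescale a (exp ℂ) := by
  ext n
  simp [expS, egf, coeff_rescale, coeff_exp, div_eq_mul_inv]

lemma expS_add (a b : ℂ) : expS (a + b) = expS a * expS b := by
  simp only [expS_eq_rescale_exp, exp_mul_exp_eq_exp_add]

lemma expS_sub_expS_ne_zero {a b : ℂ} (hab : a ≠ b) : expS a - expS b ≠ 0 := by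
  intro h
  have h1 := congrArg (coeff 1) h
  simp only [expS, egf, map_sub, coeff_mk, pow_one, Nat.factorial_one, Nat.cast_one, div_one,
    map_zero] at h1
  exact hab (sub_eq_zero.mp h1)

lemma appell_add_eq_sum_choose {B : ℂ → ℕ → ℂ} {F H : PowerSeries ℂ} (hF : F ≠ 0)
    (hB : ∀ z, egf (B z) * F = H * expS z) (z w : ℂ) (n : ℕ) :
    B (z + w) n = ∑ k ∈ range (n + 1), (n.choose k : ℂ) * w ^ k * B z (n - k) := by
  have hegf : egf (B (z + w)) = expS w * egf (B z) := by
    apply mul_right_cancel₀ hF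
    rw [hB, mul_assoc, hB, add_comm, expS_add]
    ring
  rw [expS, egf_mul_egf] at hegf
  exact congrFun (egf_injective hegf) n

lemma sum_range_succ_eq_sum_even {M : Type*} [AddCommMonoid M] (n : ℕ) (f : ℕ → M)
    (hf : ∀ k, Odd k → f k = 0) :
    ∑ k ∈ range (n + 1), f k = ∑ m ∈ range (n / 2 + 1), f (2 * m) := by
  rw [← sum_filter_add_sum_filter_not (range (n + 1)) Even,
    sum_eq_zero (s := filter (¬Even ·) _) fun k hk =>
      hf k (Nat.not_even_iff_odd.mp (mem_filter.mp hk).2), add_zero]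
  symm
  refine sum_nbij' (2 * ·) (· / 2) (fun m hm => ?_) (fun k hk => ?_) (fun m _ => ?_)
    (fun k hk => ?_) (fun m _ => rfl)
  · simp only [mem_filter, mem_range] at hm ⊢
    exact ⟨by omega, even_two_mul m⟩
  · simp only [mem_filter, mem_range] at hk ⊢
    omega
  · simp
  · obtain ⟨-, j, rfl⟩ := mem_filter.mp hk
    omega

theorem stmt8_general (x y : ℝ) (B : ℂ → ℕ → ℂ)
    (hB : ∀ z : ℂ, egf (B z) * (expS (1/2) - expS (-(1/2))) = PowerSeries.X * expS z)
    (n : ℕ) :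
    (B ((x:ℂ) + Complex.I * y) n + B ((x:ℂ) - Complex.I * y) n) / 2 =
      ∑ m ∈ Finset.range (n/2+1), (n.choose (2*m) : ℂ) * B x (n-2*m) * (y:ℂ)^(2*m) * (-1)^m := by
  have hF : expS (1/2 : ℂ) - expS (-(1/2)) ≠ 0 := expS_sub_expS_ne_zero (by norm_num)
  rw [sub_eq_add_neg, appell_add_eq_sum_choose hF hB, appell_add_eq_sum_choose hF hB,
    ← sum_add_distrib, sum_div, sum_range_succ_eq_sum_even]
  · refine sum_congr rfl fun m _ => ?_
    rw [(even_two_mul m).neg_pow, mul_pow, pow_mul I, I_sq]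
    ring
  · intro k hk
    rw [hk.neg_pow]
    ring

theorem stmt8 (x y : ℝ) (B : ℂ → ℕ → ℂ)
    (hB : ∀ z : ℂ, egf (B z) * (expS (1/2) - expS (-(1/2))) = PowerSeries.X * expS z)
    (n : ℕ) (hn : 0 < n) :
    (B ((x:ℂ) + Complex.I * y) n + B ((x:ℂ) - Complex.I * y) n) / 2 =
      ∑ m ∈ Finset.range (n/2+1), (n.choose (2*m) : ℂ) * B x (n-2*m) * (y:ℂ)^(2*m) * (-1)^m :=
  stmt8_general x y B hB n
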